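/- (Lemma 1, consolidatePathMaps correctness.) Equip timestamps ts ∈ ℕ × ℕ × ℕ with the lexicographic strict order. Define the consolidation of a list l of entries (addr, sl, ts) ∈ ℕ × Option ℕ × (ℕ × ℕ × ℕ) as the left fold starting from the everywhere-none map pm₀ : ℕ → Option (Option ℕ × (ℕ × ℕ × ℕ)), where processing entry (a, sl, ts) replaces the value at a by some (sl, ts) exactly when the current value at a is none or stores a timestamp lexicographically strictly smaller than ts, and leaves all other addresses unchanged. Then for every address a that occurs in some entry of l, the resulting map pm satisfies: pm a = some (sl, ts) for some entry (a, sl, ts) ∈ l whose timestamp ts is the maximum, with respect to the lexicographic order, of the timestamps of all entries of l with address a; and no entry of l with address a has a timestamp lexicographically greater than ts. -/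

import Mathlib

/-- A path-map entry `(addr, sl, ts)`: a block address, a slot (`none` meaning the
stash) and a logical timestamp `ts = (v, a, s)`. -/
abbrev PathMapEntry := ℕ × Option ℕ × (ℕ × ℕ × ℕ)

/-- Lexicographic strict order on timestamps:
`(v,a,s) < (v',a',s')` iff `v < v'`, or `v = v'` and `a < a'`, or
`v = v'`, `a = a'` and `s < s'`. -/
def tsLt (t t' : ℕ × ℕ × ℕ) : Prop :=
  t.1 < t'.1 ∨ (t.1 = t'.1 ∧ (t.2.1 < t'.2.1 ∨ (t.2.1 = t'.2.1 ∧ t.2.2 < t'.2.2)))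

instance : DecidableRel tsLt := fun t t' => by unfold tsLt; infer_instance

/-- Processing a single entry `(a, sl, ts)`: the value of the position map at `a` is
replaced by `some (sl, ts)` exactly when the current value at `a` is `none` or stores a
timestamp lexicographically strictly smaller than `ts`; all other addresses are
unchanged. -/
def consolidateStep (pm : ℕ → Option (Option ℕ × (ℕ × ℕ × ℕ))) (e : PathMapEntry) :
    ℕ → Option (Option ℕ × (ℕ × ℕ × ℕ)) := fun a =>
  if a = e.1 then
    match pm a with
    | none => some (e.2.1, e.2.2)
    | some (sl, ts) => if tsLt ts e.2.2 then some (e.2.1, e.2.2) else some (sl, ts)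
  else pm a

/-- `consolidatePathMaps`: fold a list of path-map entries into a position map,
starting from the everywhere-`none` map. -/
def consolidatePathMaps (l : List PathMapEntry) : ℕ → Option (Option ℕ × (ℕ × ℕ × ℕ)) :=
  l.foldl consolidateStep (fun _ => none)

lemma tsLt_trans {t₁ t₂ t₃ : ℕ × ℕ × ℕ} (h₁ : tsLt t₁ t₂) (h₂ : tsLt t₂ t₃) : tsLt t₁ t₃ := by
  unfold tsLt at *; omega

lemma tsLt_irrefl (t : ℕ × ℕ × ℕ) : ¬ tsLt t t := by unfold tsLt; omega

lemma foldl_none (l : List PathMapEntry) (pm : ℕ → Option (Option ℕ × (ℕ × ℕ × ℕ)))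
    (a : ℕ) (h : ∀ e ∈ l, e.1 ≠ a) : l.foldl consolidateStep pm a = pm a := by
  induction l generalizing pm with
  | nil => rfl
  | cons e l ih =>
    simp only [List.foldl_cons]
    rw [ih _ (fun f hf => h f (List.mem_cons_of_mem _ hf))]
    simp only [consolidateStep]
    rw [if_neg (fun hh => h e List.mem_cons_self hh.symm)]

/-- Lemma 1 (consolidatePathMaps correctness): for every address `a` occurring in some
entry of `l`, the consolidated position map maps `a` to `some (sl, ts)` for some entry
`(a, sl, ts) ∈ l` whose timestamp is maximal (w.r.t. the lexicographic order) among the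
timestamps of all entries of `l` with address `a`; in particular no entry of `l` with
address `a` has a timestamp lexicographically greater than `ts`. -/
theorem consolidatePathMaps_correct (l : List PathMapEntry) (a : ℕ)
    (ha : ∃ e ∈ l, e.1 = a) :
    ∃ sl ts, consolidatePathMaps l a = some (sl, ts) ∧ (a, sl, ts) ∈ l ∧
      ∀ e ∈ l, e.1 = a → ¬ tsLt ts e.2.2 := by
  induction l using List.reverseRecOn with
  | nil => simp at ha
  | append_singleton l e ih =>
    have hfold : consolidatePathMaps (l ++ [e]) a
        = consolidateStep (consolidatePathMaps l) e a := by
      simp [consolidatePathMaps, List.foldl_append]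
    by_cases hae : a = e.1
    · by_cases hex : ∃ f ∈ l, f.1 = a
      · obtain ⟨sl, ts, hpm, hmem, hmax⟩ := ih hex
        rw [hfold]
        simp only [consolidateStep, if_pos hae, hpm]
        by_cases hlt : tsLt ts e.2.2
        · refine ⟨e.2.1, e.2.2, by rw [if_pos hlt], ?_, ?_⟩
          · apply List.mem_append_right
            simp only [List.mem_singleton]
            rw [hae]
          · intro f hf hfa
            rcases List.mem_append.mp hf with hf | hf
            · intro hcon
              exact hmax f hf hfa (tsLt_trans hlt hcon)
            · simp only [List.mem_singleton] at hf
              subst hf; exact tsLt_irrefl _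
        · refine ⟨sl, ts, by rw [if_neg hlt], List.mem_append_left _ hmem, ?_⟩
          intro f hf hfa
          rcases List.mem_append.mp hf with hf | hf
          · exact hmax f hf hfa
          · simp only [List.mem_singleton] at hf
            subst hf; exact hlt
      · push_neg at hex
        rw [hfold]
        simp only [consolidateStep, if_pos hae]
        rw [show consolidatePathMaps l a = none from foldl_none l _ a hex]
        refine ⟨e.2.1, e.2.2, rfl, ?_, ?_⟩
        · apply List.mem_append_right
          simp only [List.mem_singleton]
          rw [hae]
        · intro f hf hfa
          rcases List.mem_append.mp hf with hf | hf
          · exact absurd hfa (hex f hf)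
          · simp only [List.mem_singleton] at hf
            subst hf; exact tsLt_irrefl _
    · obtain ⟨f, hf, hfa⟩ := ha
      rcases List.mem_append.mp hf with hf | hf
      · obtain ⟨sl, ts, hpm, hmem, hmax⟩ := ih ⟨f, hf, hfa⟩
        rw [hfold]
        simp only [consolidateStep, if_neg hae]
        refine ⟨sl, ts, hpm, List.mem_append_left _ hmem, ?_⟩
        intro g hg hga
        rcases List.mem_append.mp hg with hg | hg
        · exact hmax g hg hga
        · simp only [List.mem_singleton] at hg
          subst hg; exact absurd hga.symm hae
      · simp only [List.mem_singleton] at hf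
        subst hf; exact absurd hfa.symm hae
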